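/- (From the proof of Theorem 3.1(i)) Suppose RCRCQ holds at x̄ ∈ Γ. Then there exists an open neighborhood U of x̄ such that for every x ∈ Γ ∩ U, every x* ∈ ℝⁿ, and every v ∈ ℝⁿ with ⟨∇q_i(x), v⟩ = 0 for all i ∈ E ∪ I⁺(x, x*), there exist t̄ > 0 and a continuously differentiable curve x̃ : (−t̄, t̄) → ℝⁿ such that x̃(0) = x, x̃′(0) = v, and q_i(x̃(t)) = 0 for all i ∈ E ∪ I⁺(x, x*) and all t ∈ (−t̄, t̄). -/

import Mathlib

open Filter Topology Metric Set
open scoped RealInnerProductSpace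

noncomputable section

/-- The Bouligand (contingent) tangent cone to `s` at `x`. -/
def BCone {V : Type*} [NormedAddCommGroup V] [NormedSpace ℝ V] (s : Set V) (x : V) : Set V :=
  {u | ∃ (t : ℕ → ℝ) (c : ℕ → V), (∀ k, 0 < t k) ∧ Filter.Tendsto t Filter.atTop (𝓝 0) ∧
    Filter.Tendsto c Filter.atTop (𝓝 u) ∧ ∀ k, x + t k • c k ∈ s}

/-- The (convex) normal cone to `K` at `w`; empty when `w ∉ K`. -/
def NCone {V : Type*} [NormedAddCommGroup V] [InnerProductSpace ℝ V] (K : Set V) (w : V) :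
    Set V :=
  {z | w ∈ K ∧ ∀ y ∈ K, ⟪z, y - w⟫ ≤ 0}

variable {n : ℕ} {ι : Type*} [Fintype ι] [DecidableEq ι]

/-- The feasible set `Γ` of the nonlinear program. -/
def Feas (E I : Finset ι) (q : ι → EuclideanSpace ℝ (Fin n) → ℝ) :
    Set (EuclideanSpace ℝ (Fin n)) :=
  {x | (∀ i ∈ E, q i x = 0) ∧ ∀ i ∈ I, q i x ≤ 0}

/-- The set of active inequality constraints at `x`. -/
def ActiveI (I : Finset ι) (q : ι → EuclideanSpace ℝ (Fin n) → ℝ)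
    (x : EuclideanSpace ℝ (Fin n)) : Finset ι :=
  I.filter fun i => q i x = 0

/-- The Lagrange multiplier set `Λ(x, x*)`. -/
def Mult (I : Finset ι) (q : ι → EuclideanSpace ℝ (Fin n) → ℝ)
    (x xs : EuclideanSpace ℝ (Fin n)) : Set (EuclideanSpace ℝ ι) :=
  {lam | ∑ i, lam i • gradient (q i) x = xs ∧ ∀ i ∈ I, 0 ≤ lam i ∧ lam i * q i x = 0}

/-- `I⁺(λ)`: the inequality indices with positive multiplier. -/
def IplusF (I : Finset ι) (lam : EuclideanSpace ℝ ι) : Finset ι :=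
  I.filter fun i => 0 < lam i

/-- `I⁺(x, x*) = ∪_{λ ∈ Λ(x,x*)} I⁺(λ)`. -/
def IplusSet (I : Finset ι) (q : ι → EuclideanSpace ℝ (Fin n) → ℝ)
    (x xs : EuclideanSpace ℝ (Fin n)) : Set ι :=
  {i | ∃ lam ∈ Mult I q x xs, i ∈ IplusF I lam}

/-- Rank of the family of gradients `{∇q_i(x) : i ∈ s}`. -/
def RankAt (q : ι → EuclideanSpace ℝ (Fin n) → ℝ) (s : Finset ι)
    (x : EuclideanSpace ℝ (Fin n)) : ℕ :=
  Module.finrank ℝ (Submodule.span ℝ ((fun i => gradient (q i) x) '' ↑s))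

/-- The relaxed constant rank constraint qualification at `xbar`. -/
def RCRCQat (E I : Finset ι) (q : ι → EuclideanSpace ℝ (Fin n) → ℝ)
    (xbar : EuclideanSpace ℝ (Fin n)) : Prop :=
  ∃ U ∈ 𝓝 xbar, ∀ J ⊆ ActiveI I q xbar, ∀ x ∈ U, ∀ y ∈ U,
    RankAt q (E ∪ J) x = RankAt q (E ∪ J) y

/-- The set `Θ = {0}^E × ℝ₋^I`. -/
def Theta (E I : Finset ι) : Set (EuclideanSpace ℝ ι) :=
  {y | (∀ i ∈ E, y i = 0) ∧ ∀ i ∈ I, y i ≤ 0}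

/-- The metric subregularity constraint qualification at `x` with modulus `κ`. -/
def MSCQat (E I : Finset ι) (q : ι → EuclideanSpace ℝ (Fin n) → ℝ)
    (x : EuclideanSpace ℝ (Fin n)) (κ : ℝ) : Prop :=
  ∃ U ∈ 𝓝 x, ∀ u ∈ U,
    Metric.infDist u (Feas E I q) ≤
      κ * Metric.infDist (show EuclideanSpace ℝ ι from WithLp.toLp 2 fun i => q i u) (Theta E I)

/-- The critical cone `K(x, x*) = T_Γ(x) ∩ {x*}^⊥`. -/
def Crit (E I : Finset ι) (q : ι → EuclideanSpace ℝ (Fin n) → ℝ)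
    (x xs : EuclideanSpace ℝ (Fin n)) : Set (EuclideanSpace ℝ (Fin n)) :=
  BCone (Feas E I q) x ∩ {v | ⟪xs, v⟫ = 0}

/-- Hessian of `f` at `x` applied to `w` (derivative of the gradient map). -/
def HessApp (f : EuclideanSpace ℝ (Fin n) → ℝ) (x w : EuclideanSpace ℝ (Fin n)) :
    EuclideanSpace ℝ (Fin n) :=
  fderiv ℝ (fun y => gradient f y) x w

/-- `∇²⟨λ, q⟩(x) w = Σ_i λ_i ∇²q_i(x) w`. -/
def HessComb (q : ι → EuclideanSpace ℝ (Fin n) → ℝ) (lam : EuclideanSpace ℝ ι)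
    (x w : EuclideanSpace ℝ (Fin n)) : EuclideanSpace ℝ (Fin n) :=
  ∑ i, lam i • HessApp (q i) x w

/-- The quadratic form `⟨v, ∇²⟨λ,q⟩(x) v⟩`. -/
def QuadComb (q : ι → EuclideanSpace ℝ (Fin n) → ℝ) (lam : EuclideanSpace ℝ ι)
    (x v : EuclideanSpace ℝ (Fin n)) : ℝ :=
  ⟪v, HessComb q lam x v⟫

/-- `Λ(x, x*; v)`: the argmax of the quadratic form over `Λ(x, x*)`. -/
def MultArgmax (I : Finset ι) (q : ι → EuclideanSpace ℝ (Fin n) → ℝ)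
    (x xs v : EuclideanSpace ℝ (Fin n)) : Set (EuclideanSpace ℝ ι) :=
  {lam ∈ Mult I q x xs | ∀ mu ∈ Mult I q x xs, QuadComb q mu x v ≤ QuadComb q lam x v}

/-- The set `G = {(u, u*) : u ∈ Γ, Λ(u, u*) ≠ ∅}`. -/
def GSet (E I : Finset ι) (q : ι → EuclideanSpace ℝ (Fin n) → ℝ) :
    Set (EuclideanSpace ℝ (Fin n) × EuclideanSpace ℝ (Fin n)) :=
  {p | p.1 ∈ Feas E I q ∧ (Mult I q p.1 p.2).Nonempty}

/-- Argmin set of the tilted problem `M_γ(v)`. -/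
def MArgmin (φ : EuclideanSpace ℝ (Fin n) → ℝ) (Γ : Set (EuclideanSpace ℝ (Fin n)))
    (xbar : EuclideanSpace ℝ (Fin n)) (γ : ℝ) (v : EuclideanSpace ℝ (Fin n)) :
    Set (EuclideanSpace ℝ (Fin n)) :=
  {x ∈ Γ ∩ Metric.closedBall xbar γ |
    ∀ y ∈ Γ ∩ Metric.closedBall xbar γ, φ x - ⟪v, x⟫ ≤ φ y - ⟪v, y⟫}

/-- Tilt-stable local minimizer with modulus `κ`. -/
def TiltStableWith (φ : EuclideanSpace ℝ (Fin n) → ℝ) (Γ : Set (EuclideanSpace ℝ (Fin n)))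
    (xbar : EuclideanSpace ℝ (Fin n)) (κ : ℝ) : Prop :=
  ∃ γ > (0:ℝ), ∃ W ∈ 𝓝 (0 : EuclideanSpace ℝ (Fin n)),
    ∃ m : EuclideanSpace ℝ (Fin n) → EuclideanSpace ℝ (Fin n),
      m 0 = xbar ∧ (∀ v ∈ W, MArgmin φ Γ xbar γ v = {m v}) ∧
      ∀ v₁ ∈ W, ∀ v₂ ∈ W, ‖m v₁ - m v₂‖ ≤ κ * ‖v₁ - v₂‖

/-- Tilt-stable local minimizer. -/
def TiltStable (φ : EuclideanSpace ℝ (Fin n) → ℝ) (Γ : Set (EuclideanSpace ℝ (Fin n)))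
    (xbar : EuclideanSpace ℝ (Fin n)) : Prop :=
  ∃ κ > (0:ℝ), TiltStableWith φ Γ xbar κ

/-- The exact bound of tilt stability. -/
def TiltBound (φ : EuclideanSpace ℝ (Fin n) → ℝ) (Γ : Set (EuclideanSpace ℝ (Fin n)))
    (xbar : EuclideanSpace ℝ (Fin n)) : ℝ :=
  sInf {κ : ℝ | 0 < κ ∧ TiltStableWith φ Γ xbar κ}

/-
Positive multipliers live on active constraints, and constraints inactive at `x̄` stay inactive
nearby, so near `x̄` the index set `S = E ∪ I⁺(x, x*)` consists of constraints active at `x̄` and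
RCRCQ keeps the rank of `{∇q_i : i ∈ S}` constant near `x`. A maximal linearly independent
subfamily of these gradients at `x` stays independent nearby, so by constant rank it spans all of
them there. The implicit function theorem yields a `C¹` curve through `x` with velocity `v` on
which the subfamily vanishes; along it every other `q_i`, `i ∈ S`, has derivative
`⟪∇q_i, c'⟫ = 0`, a combination of the vanishing derivatives of the subfamily, so it vanishes too.
-/

theorem surjective_inner_of_linearIndependent {V κ : Type*} [NormedAddCommGroup V]
    [InnerProductSpace ℝ V] [Fintype κ] {u : κ → V} (hu : LinearIndependent ℝ u) :
    Function.Surjective fun w : V => fun k => ⟪u k, w⟫ := by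
  classical
  intro y
  -- `⟪u k, ∑ l, b l • u l⟫ = (gram u *ᵥ b) k`, and the Gram matrix of `u` is invertible.
  have hunit : IsUnit (Matrix.gram ℝ u) :=
    (Matrix.isUnit_iff_isUnit_det _).2 (Matrix.det_gram_ne_zero_iff_linearIndependent.2 hu).isUnit
  obtain ⟨b, rfl⟩ := Matrix.mulVec_surjective_iff_isUnit.2 hunit y
  refine ⟨∑ l, b l • u l, funext fun k => ?_⟩
  simp [inner_sum, inner_smul_right, Matrix.mulVec, dotProduct, Matrix.gram_apply, mul_comm]

theorem mem_span_range_of_finrank_span_image_le {K V ι κ : Type*} [DivisionRing K]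
    [AddCommGroup V] [Module K V] [Fintype κ] {g : ι → V} {s : Finset ι} {a : κ → ι}
    (ha : ∀ k, a k ∈ s) (hli : LinearIndependent K (g ∘ a))
    (hrank : Module.finrank K (Submodule.span K (g '' s)) ≤ Fintype.card κ) {i : ι}
    (hi : i ∈ s) : g i ∈ Submodule.span K (range (g ∘ a)) := by
  have := FiniteDimensional.span_of_finite K (s.finite_toSet.image g)
  have hle : Submodule.span K (range (g ∘ a)) ≤ Submodule.span K (g '' s) :=
    Submodule.span_mono <| range_subset_iff.2 fun k => mem_image_of_mem g (ha k)
  rw [Submodule.eq_of_le_of_finrank_le hle (by rwa [finrank_span_eq_card hli])]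
  exact Submodule.subset_span (mem_image_of_mem g hi)

theorem ContDiff.continuous_gradient {V : Type*} [NormedAddCommGroup V] [InnerProductSpace ℝ V]
    [CompleteSpace V] {f : V → ℝ} (hf : ContDiff ℝ 1 f) : Continuous (gradient f) :=
  (InnerProductSpace.toDual ℝ V).symm.continuous.comp (hf.continuous_fderiv one_ne_zero)

theorem exists_Ioo_of_eventually_nhds_zero {p : ℝ → Prop} (h : ∀ᶠ t in 𝓝 0, p t) :
    ∃ ε > 0, ∀ t ∈ Ioo (-ε) ε, p t := by
  simpa [Real.ball_eq_Ioo] using Metric.eventually_nhds_iff_ball.1 h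

theorem exists_curve_of_fderiv_surjective {E F : Type*} [NormedAddCommGroup E]
    [NormedSpace ℝ E] [NormedAddCommGroup F] [NormedSpace ℝ F] [FiniteDimensional ℝ F]
    {f : E → F} {x v : E} (hf : ContDiffAt ℝ 1 f x)
    (hsurj : Function.Surjective (fderiv ℝ f x)) (hv : fderiv ℝ f x v = 0) :
    ∃ c : ℝ → E, ContDiffAt ℝ 1 c 0 ∧ c 0 = x ∧ HasDerivAt c v 0 ∧
      ∀ᶠ t in 𝓝 0, f (c t) = f x := by
  have := FiniteDimensional.complete ℝ F
  obtain ⟨R, hR⟩ :=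
    (fderiv ℝ f x).exists_rightInverse_of_surjective (LinearMap.range_eq_top.2 hsurj)
  -- Seek the curve as `x + t • v + R (ψ t)` with `R` a right inverse of `f' x`; the implicit
  -- function theorem provides `ψ`, and `ψ' 0 = 0` because `f' x v = 0`.
  set L : ℝ × F →L[ℝ] E :=
    (ContinuousLinearMap.fst ℝ ℝ F).smulRight v + R ∘L ContinuousLinearMap.snd ℝ ℝ F
  have hL : ∀ p : ℝ × F, L p = p.1 • v + R p.2 := fun p => rfl
  set g : ℝ × F → F := fun p => f (x + L p)
  have hg : ContDiffAt ℝ 1 g (0, 0) := by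
    refine ContDiffAt.comp (g := f) _ ?_ (contDiffAt_const.add L.contDiff.contDiffAt)
    simpa [hL] using hf
  have hg' : fderiv ℝ g (0, 0) = fderiv ℝ f x ∘L L := by
    have hfx : HasFDerivAt f (fderiv ℝ f x) (x + L (0, 0)) := by
      simpa [hL] using (hf.differentiableAt one_ne_zero).hasFDerivAt
    exact (hfx.comp (0, 0) (L.hasFDerivAt.const_add x)).fderiv
  have hinr : fderiv ℝ g (0, 0) ∘L .inr ℝ ℝ F = .id ℝ F := by
    rw [hg', ← hR]; ext w; simp [hL]
  have hinl : fderiv ℝ g (0, 0) ∘L .inl ℝ ℝ F = 0 := by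
    rw [hg']; ext; simp [hL, hv]
  have hinv : (fderiv ℝ g (0, 0) ∘L .inr ℝ ℝ F).IsInvertible := by
    rw [hinr]; exact ⟨.refl ℝ F, rfl⟩
  set ψ := hg.implicitFunction one_ne_zero hinv
  have hψ0 : ψ 0 = 0 := hg.implicitFunction_apply_self one_ne_zero hinv
  have hψ' : HasDerivAt ψ 0 0 := by
    simpa [hinl] using
      (hg.hasStrictFDerivAt_implicitFunction one_ne_zero hinv).hasFDerivAt.hasDerivAt
  refine ⟨fun t => x + L (t, ψ t), ?_, by simp [hL, hψ0], ?_, ?_⟩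
  · exact contDiffAt_const.add (L.contDiff.contDiffAt.comp _
      (contDiffAt_id.prodMk (hg.contDiffAt_implicitFunction one_ne_zero hinv)))
  · simpa [hL] using
      (((hasDerivAt_id (0:ℝ)).smul_const v).add (R.hasFDerivAt.comp_hasDerivAt _ hψ')).const_add x
  · filter_upwards [hg.eventually_apply_implicitFunction one_ne_zero hinv] with t ht
    have ht : g (t, ψ t) = g (0, 0) := ht
    simpa [g, hL] using ht

theorem exists_curve_of_linearIndependent_gradient {V κ : Type*} [NormedAddCommGroup V]
    [InnerProductSpace ℝ V] [CompleteSpace V] [Fintype κ] {f : κ → V → ℝ} {x v : V}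
    (hf : ∀ k, ContDiffAt ℝ 1 (f k) x) (hli : LinearIndependent ℝ fun k => gradient (f k) x)
    (hv : ∀ k, ⟪gradient (f k) x, v⟫ = 0) :
    ∃ c : ℝ → V, ContDiffAt ℝ 1 c 0 ∧ c 0 = x ∧ HasDerivAt c v 0 ∧
      ∀ᶠ t in 𝓝 0, ∀ k, f k (c t) = f k x := by
  have hF' : fderiv ℝ (fun y k => f k y) x = ContinuousLinearMap.pi fun k => fderiv ℝ (f k) x :=
    (hasFDerivAt_pi.2 fun k => ((hf k).differentiableAt one_ne_zero).hasFDerivAt).fderiv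
  obtain ⟨c, hc, hc0, hcv, hcf⟩ := exists_curve_of_fderiv_surjective (contDiffAt_pi.2 hf)
    (by simpa [hF'] using surjective_inner_of_linearIndependent hli)
    (by ext k; simpa [hF'] using hv k)
  exact ⟨c, hc, hc0, hcv, hcf.mono fun t ht k => congrFun ht k⟩

theorem IsOpen.is_const_comp_of_gradient_mem_span {V κ : Type*} [NormedAddCommGroup V]
    [InnerProductSpace ℝ V] [CompleteSpace V] {f : κ → V → ℝ} {g : V → ℝ} {c : ℝ → V}
    {s : Set ℝ} (hs : IsOpen s) (hs' : IsPreconnected s) (hf : ∀ k, Differentiable ℝ (f k))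
    (hg : Differentiable ℝ g) (hc : DifferentiableOn ℝ c s)
    (hfc : ∀ t ∈ s, ∀ k, f k (c t) = 0)
    (hspan : ∀ t ∈ s, gradient g (c t) ∈ Submodule.span ℝ (range fun k => gradient (f k) (c t)))
    {t₀ t : ℝ} (ht₀ : t₀ ∈ s) (ht : t ∈ s) : g (c t) = g (c t₀) := by
  have hderiv : ∀ t ∈ s, HasDerivAt (g ∘ c) 0 t := by
    intro t ht
    have hct : HasDerivAt c (deriv c t) t :=
      ((hc t ht).differentiableAt (hs.mem_nhds ht)).hasDerivAt
    have hcomp : ∀ h : V → ℝ, Differentiable ℝ h →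
        HasDerivAt (h ∘ c) ⟪gradient h (c t), deriv c t⟫ t := fun h hh => by
      simpa using (hh (c t)).hasFDerivAt.comp_hasDerivAt t hct
    have horth : ∀ k, ⟪gradient (f k) (c t), deriv c t⟫ = 0 := fun k =>
      (hcomp _ (hf k)).unique <| (hasDerivAt_const t 0).congr_of_eventuallyEq <|
        eventually_of_mem (hs.mem_nhds ht) fun r hr => hfc r hr k
    have hle : Submodule.span ℝ (range fun k => gradient (f k) (c t)) ≤ (ℝ ∙ deriv c t)ᗮ :=
      Submodule.span_le.2 <| range_subset_iff.2 fun k =>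
        Submodule.mem_orthogonal_singleton_iff_inner_left.2 (horth k)
    simpa [Submodule.mem_orthogonal_singleton_iff_inner_left.1 (hle (hspan t ht))] using
      hcomp g hg
  exact hs.is_const_of_deriv_eq_zero hs'
    (fun t ht => (hderiv t ht).differentiableAt.differentiableWithinAt)
    (fun t ht => (hderiv t ht).deriv) ht ht₀

theorem exists_curve_of_rankAt_le {n : ℕ} {ι : Type*} {q : ι → EuclideanSpace ℝ (Fin n) → ℝ}
    (hq : ∀ i, ContDiff ℝ 1 (q i)) {S : Finset ι} {U : Set (EuclideanSpace ℝ (Fin n))}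
    {x v : EuclideanSpace ℝ (Fin n)} (hU : U ∈ 𝓝 x)
    (hrank : ∀ y ∈ U, RankAt q S y ≤ RankAt q S x) (hzero : ∀ i ∈ S, q i x = 0)
    (hv : ∀ i ∈ S, ⟪gradient (q i) x, v⟫ = 0) :
    ∃ tb > (0:ℝ), ∃ c : ℝ → EuclideanSpace ℝ (Fin n),
      ContDiffOn ℝ 1 c (Ioo (-tb) tb) ∧ c 0 = x ∧ HasDerivAt c v 0 ∧
      ∀ t ∈ Ioo (-tb) tb, ∀ i ∈ S, q i (c t) = 0 := by
  obtain ⟨κ, a, ha, hspan, hli⟩ := exists_linearIndependent' ℝ fun i : S => gradient (q i) x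
  have : Finite κ := Finite.of_injective a ha
  have := Fintype.ofFinite κ
  have hcard : RankAt q S x = Fintype.card κ := by
    rw [RankAt, ← finrank_span_eq_card hli, hspan, image_eq_range]
    rfl
  obtain ⟨c, hc, hc0, hcv, hcq⟩ := exists_curve_of_linearIndependent_gradient
    (f := fun k => q (a k)) (fun k => (hq _).contDiffAt) hli (fun k => hv _ (a k).2)
  have hli_near : ∀ᶠ y in 𝓝 x, LinearIndependent ℝ fun k => gradient (q (a k)) y :=
    (continuous_pi fun k => (hq (a k)).continuous_gradient).continuousAt.eventually hli.eventually
  have hnear : ∀ᶠ t in 𝓝 (0:ℝ), ContDiffAt ℝ 1 c t ∧ (∀ k, q (a k) (c t) = 0) ∧ c t ∈ U ∧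
      LinearIndependent ℝ fun k => gradient (q (a k)) (c t) := by
    have hct : Tendsto c (𝓝 0) (𝓝 x) := hc0 ▸ hc.continuousAt.tendsto
    filter_upwards [hc.eventually (by simp), hcq, hct (inter_mem hU hli_near)] with t ht htq htU
    exact ⟨ht, fun k => (htq k).trans (hzero _ (a k).2), htU⟩
  obtain ⟨tb, htb, hIoo⟩ := exists_Ioo_of_eventually_nhds_zero hnear
  have h0 : (0:ℝ) ∈ Ioo (-tb) tb := ⟨neg_lt_zero.2 htb, htb⟩
  refine ⟨tb, htb, c, fun t ht => (hIoo t ht).1.contDiffWithinAt, hc0, hcv,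
    fun t ht i hi => ?_⟩
  rw [← hzero i hi, ← hc0]
  refine isOpen_Ioo.is_const_comp_of_gradient_mem_span isPreconnected_Ioo
    (fun k => (hq (a k)).differentiable one_ne_zero) ((hq i).differentiable one_ne_zero)
    (fun t ht => (hIoo t ht).1.differentiableAt one_ne_zero |>.differentiableWithinAt)
    (fun t ht => (hIoo t ht).2.1) (fun t ht => ?_) h0 ht
  exact mem_span_range_of_finrank_span_image_le (g := fun i => gradient (q i) (c t))
    (fun k => (a k).2) (hIoo t ht).2.2.2 (hcard ▸ hrank _ (hIoo t ht).2.2.1) hi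

theorem mem_activeI_of_mem_IplusSet {n : ℕ} {ι : Type*} [Fintype ι] {I : Finset ι}
    {q : ι → EuclideanSpace ℝ (Fin n) → ℝ} {x xs : EuclideanSpace ℝ (Fin n)} {i : ι}
    (hi : i ∈ IplusSet I q x xs) : i ∈ ActiveI I q x := by
  obtain ⟨lam, hlam, hpos⟩ := hi
  rw [IplusF, Finset.mem_filter] at hpos
  exact Finset.mem_filter.2
    ⟨hpos.1, (mul_eq_zero.1 (hlam.2 i hpos.1).2).resolve_left hpos.2.ne'⟩

theorem eventually_activeI_subset {n : ℕ} {ι : Type*} {q : ι → EuclideanSpace ℝ (Fin n) → ℝ}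
    (hq : ∀ i, Continuous (q i)) (I : Finset ι) (xbar : EuclideanSpace ℝ (Fin n)) :
    ∀ᶠ y in 𝓝 xbar, ActiveI I q y ⊆ ActiveI I q xbar := by
  have hinactive : ∀ i ∈ I, ∀ᶠ y in 𝓝 xbar, q i y = 0 → q i xbar = 0 := fun i _ => by
    by_cases h : q i xbar = 0
    · simp [h]
    · exact ((hq i).continuousAt.eventually_ne h).mono fun y hy hy0 => absurd hy0 hy
  filter_upwards [I.eventually_all.2 hinactive] with y hy i hi
  simp only [ActiveI, Finset.mem_filter] at hi ⊢
  exact ⟨hi.1, hy i hi.1 hi.2⟩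

theorem rcrcq_curve_construction_general
    {n : ℕ} {ι : Type*} [Fintype ι] [DecidableEq ι]
    (E I : Finset ι)
    (q : ι → EuclideanSpace ℝ (Fin n) → ℝ) (hq : ∀ i, ContDiff ℝ 2 (q i))
    (xbar : EuclideanSpace ℝ (Fin n))
    (hrcrcq : RCRCQat E I q xbar) :
    ∃ U : Set (EuclideanSpace ℝ (Fin n)), IsOpen U ∧ xbar ∈ U ∧
      ∀ x ∈ Feas E I q ∩ U, ∀ xs v : EuclideanSpace ℝ (Fin n),
        (∀ i, (i ∈ E ∨ i ∈ IplusSet I q x xs) → ⟪gradient (q i) x, v⟫ = 0) →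
        ∃ tb > (0:ℝ), ∃ c : ℝ → EuclideanSpace ℝ (Fin n),
          ContDiffOn ℝ 1 c (Set.Ioo (-tb) tb) ∧ c 0 = x ∧ HasDerivAt c v 0 ∧
          ∀ t ∈ Set.Ioo (-tb) tb, ∀ i, (i ∈ E ∨ i ∈ IplusSet I q x xs) → q i (c t) = 0 := by
  classical
  obtain ⟨U₀, hU₀, hrank⟩ := hrcrcq
  set N := U₀ ∩ {y | ActiveI I q y ⊆ ActiveI I q xbar}
  have hN : N ∈ 𝓝 xbar :=
    inter_mem hU₀ (eventually_activeI_subset (fun i => (hq i).continuous) I xbar)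
  refine ⟨interior N, isOpen_interior, mem_interior_iff_mem_nhds.2 hN, ?_⟩
  rintro x ⟨hxΓ, hxN⟩ xs v hv
  obtain ⟨hxU₀, hxact⟩ := interior_subset hxN
  set P := I.filter (· ∈ IplusSet I q x xs)
  have hPx : P ⊆ ActiveI I q x := fun i hi =>
    mem_activeI_of_mem_IplusSet (Finset.mem_filter.1 hi).2
  have hS : ∀ i, i ∈ E ∨ i ∈ IplusSet I q x xs ↔ i ∈ E ∪ P := fun i => by
    simp only [Finset.mem_union, P, Finset.mem_filter]
    exact or_congr_right
      ⟨fun hi => ⟨Finset.mem_of_mem_filter i (mem_activeI_of_mem_IplusSet hi), hi⟩, And.right⟩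
  have hzero : ∀ i ∈ E ∪ P, q i x = 0 := fun i hi => by
    rcases Finset.mem_union.1 hi with hiE | hiP
    · exact hxΓ.1 i hiE
    · exact (Finset.mem_filter.1 (hPx hiP)).2
  obtain ⟨tb, htb, c, hc, hc0, hcv, hcq⟩ := exists_curve_of_rankAt_le
    (fun i => (hq i).of_le one_le_two) (isOpen_interior.mem_nhds hxN)
    (fun y hy => (hrank P (hPx.trans hxact) y (interior_subset hy).1 x hxU₀).le)
    hzero (fun i hi => hv i ((hS i).2 hi))
  exact ⟨tb, htb, c, hc, hc0, hcv, fun t ht i hi => hcq t ht i ((hS i).1 hi)⟩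

/-- **From the proof of Theorem 3.1(i).** Under RCRCQ at `x̄ ∈ Γ`, on a neighborhood of `x̄`,
for every feasible `x`, every `x*` and every `v` orthogonal to `∇q_i(x)` for all
`i ∈ E ∪ I⁺(x, x*)`, there is a `C¹` curve `x̃` with `x̃(0) = x`, `x̃′(0) = v` and
`q_i(x̃(t)) = 0` for all `i ∈ E ∪ I⁺(x, x*)` and all `t ∈ (−t̄, t̄)`. -/
theorem rcrcq_curve_construction
    {n : ℕ} {ι : Type*} [Fintype ι] [DecidableEq ι] [Nonempty ι]
    (E I : Finset ι) (hdisj : Disjoint E I) (hunion : E ∪ I = Finset.univ)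
    (q : ι → EuclideanSpace ℝ (Fin n) → ℝ) (hq : ∀ i, ContDiff ℝ 2 (q i))
    (xbar : EuclideanSpace ℝ (Fin n)) (hfeas : xbar ∈ Feas E I q)
    (hrcrcq : RCRCQat E I q xbar) :
    ∃ U : Set (EuclideanSpace ℝ (Fin n)), IsOpen U ∧ xbar ∈ U ∧
      ∀ x ∈ Feas E I q ∩ U, ∀ xs v : EuclideanSpace ℝ (Fin n),
        (∀ i, (i ∈ E ∨ i ∈ IplusSet I q x xs) → ⟪gradient (q i) x, v⟫ = 0) →
        ∃ tb > (0:ℝ), ∃ c : ℝ → EuclideanSpace ℝ (Fin n),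
          ContDiffOn ℝ 1 c (Set.Ioo (-tb) tb) ∧ c 0 = x ∧ HasDerivAt c v 0 ∧
          ∀ t ∈ Set.Ioo (-tb) tb, ∀ i, (i ∈ E ∨ i ∈ IplusSet I q x xs) → q i (c t) = 0 :=
  rcrcq_curve_construction_general E I q hq xbar hrcrcq
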